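/- arXiv:2105.08225 — 3 statements merged into one kernel-verified Lean document; each statement's English description precedes it below -/
import Mathlib

section
/- If G1 has at least one edge, then for any graph G2, the chromatic number of the lexicographic product satisfies χ(G1[G2]) ≥ χ(G1) + 2χ(G2) − 2. -/
open SimpleGraph Finset

/-- Lexicographic product of simple graphs. -/
def SimpleGraph.lexProd {α β : Type*} (G₁ : SimpleGraph α) (G₂ : SimpleGraph β) :
    SimpleGraph (α × β) where
  Adj x y := G₁.Adj x.1 y.1 ∨ (x.1 = y.1 ∧ G₂.Adj x.2 y.2)
  symm := by
    constructor
    rintro x y (h | ⟨h1, h2⟩)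
    · exact Or.inl h.symm
    · exact Or.inr ⟨h1.symm, h2.symm⟩
  loopless := by
    constructor
    rintro x (h | ⟨-, h⟩)
    · exact G₁.irrefl h
    · exact G₂.irrefl h

/-- `c` is a proper coloring such that each vertex `v` sees at least
`min r (deg v)` distinct colors among its neighbors. -/
def SimpleGraph.IsRDynamicColoring {α : Type*} (G : SimpleGraph α) (r : ℕ) (c : α → ℕ) : Prop :=
  (∀ u v, G.Adj u v → c u ≠ c v) ∧
  ∀ v, min r (G.neighborSet v).ncard ≤ (c '' G.neighborSet v).ncard

/-- The `r`-dynamic chromatic number: least `k` such that there is an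
`r`-dynamic coloring with colors in `{0, …, k-1}`. -/
noncomputable def SimpleGraph.rDynChromaticNumber {α : Type*} (G : SimpleGraph α) (r : ℕ) : ℕ :=
  sInf {k | ∃ c : α → ℕ, G.IsRDynamicColoring r c ∧ ∀ v, c v < k}

/-- Maximum degree (via `Set.ncard` of neighbor sets). -/
noncomputable def SimpleGraph.maxDeg {α : Type*} (G : SimpleGraph α) : ℕ :=
  sSup (Set.range fun v => (G.neighborSet v).ncard)

/-- Minimum degree (via `Set.ncard` of neighbor sets). -/
noncomputable def SimpleGraph.minDeg {α : Type*} (G : SimpleGraph α) : ℕ :=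
  sInf (Set.range fun v => (G.neighborSet v).ncard)

/-- The star `K_{1,m}`: center `0` adjacent to the `m` leaves. -/
def starGraph (m : ℕ) : SimpleGraph (Fin (m + 1)) :=
  SimpleGraph.fromRel (fun i _ => i = 0)

/-- The double star `K_{1,m,m}`: center `0`, middle vertices `1,…,m`,
outer leaf `i + m` attached to middle vertex `i`. -/
def doubleStarGraph (m : ℕ) : SimpleGraph (Fin (2 * m + 1)) :=
  SimpleGraph.fromRel (fun i j =>
    ((i : ℕ) = 0 ∧ 1 ≤ (j : ℕ) ∧ (j : ℕ) ≤ m) ∨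
    (1 ≤ (i : ℕ) ∧ (i : ℕ) ≤ m ∧ (j : ℕ) = (i : ℕ) + m))

/-- The triple star `K_{1,m,m,m}`: center `0`, middle vertices `1,…,m`,
vertex `i + m` attached to `i` for `1 ≤ i ≤ 2m`. -/
def tripleStarGraph (m : ℕ) : SimpleGraph (Fin (3 * m + 1)) :=
  SimpleGraph.fromRel (fun i j =>
    ((i : ℕ) = 0 ∧ 1 ≤ (j : ℕ) ∧ (j : ℕ) ≤ m) ∨
    (1 ≤ (i : ℕ) ∧ (i : ℕ) ≤ 2 * m ∧ (j : ℕ) = (i : ℕ) + m))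

/-! In a proper colouring of `G₁[G₂]` with `m` colours, each fibre `{v} × V(G₂)` uses at least
`χ(G₂)` colours, and adjacent vertices of `G₁` have disjoint fibre colour sets. Such a system of
sets, each of size at least `k`, already yields an `(m - 2k + 2)`-colouring of `G₁`. -/

theorem Fin.min'_add_card_le {m : ℕ} (s : Finset (Fin m)) (hs : s.Nonempty) :
    (s.min' hs : ℕ) + #s ≤ m := by
  have hsub : s ⊆ Ici (s.min' hs) := fun x hx => mem_Ici.2 (s.min'_le x hx)
  have := card_le_card hsub
  rw [Fin.card_Ici] at this
  omega

/-- Colour each vertex by the least element of its set, capped at `m - 2k + 1`. Two adjacent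
vertices can share a colour only at the cap, and then their disjoint sets, of total size at least
`2k`, would fit into the `2k - 1` values above the cap. -/
theorem SimpleGraph.colorable_of_disjoint_finsets {α : Type*} {G : SimpleGraph α} {m k : ℕ}
    (S : α → Finset (Fin m)) (hne : ∀ v, (S v).Nonempty) (hcard : ∀ v, k ≤ #(S v))
    (hdisj : ∀ u v, G.Adj u v → Disjoint (S u) (S v)) : G.Colorable (m - 2 * k + 2) := by
  refine ⟨Coloring.mk (fun v => ⟨min ((S v).min' (hne v)) (m - 2 * k + 1), by omega⟩) ?_⟩
  intro u v huv heq
  have hmin_ne : ((S u).min' (hne u) : ℕ) ≠ (S v).min' (hne v) := fun h =>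
    Finset.disjoint_left.1 (hdisj u v huv) (min'_mem _ _)
      (by rw [Fin.val_injective h]; exact min'_mem _ _)
  have hcap : m - 2 * k + 1 ≤ ((S u ∪ S v).min' ((hne u).mono subset_union_left) : ℕ) := by
    have hval := congrArg Fin.val heq
    dsimp only at hval
    rw [min'_union (hne u) (hne v), Fin.coe_min]
    omega
  have := Fin.min'_add_card_le (S u ∪ S v) ((hne u).mono subset_union_left)
  rw [card_union_of_disjoint (hdisj u v huv)] at this
  have := hcard u
  have := hcard v
  omega

namespace SimpleGraph.lexProd

variable {α β γ : Type*} {G₁ : SimpleGraph α} {G₂ : SimpleGraph β}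

theorem adj_of_left {u v : α} (h : G₁.Adj u v) (b b' : β) : (G₁.lexProd G₂).Adj (u, b) (v, b') :=
  Or.inl h

theorem adj_of_right (v : α) {b b' : β} (h : G₂.Adj b b') : (G₁.lexProd G₂).Adj (v, b) (v, b') :=
  Or.inr ⟨rfl, h⟩

variable [Fintype β] [DecidableEq γ]

def fiberColors (C : (G₁.lexProd G₂).Coloring γ) (v : α) : Finset γ :=
  univ.image fun b => C (v, b)

theorem fiberColors_nonempty [Nonempty β] (C : (G₁.lexProd G₂).Coloring γ) (v : α) :
    (fiberColors C v).Nonempty :=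
  univ_nonempty.image _

theorem disjoint_fiberColors (C : (G₁.lexProd G₂).Coloring γ) {u v : α} (h : G₁.Adj u v) :
    Disjoint (fiberColors C u) (fiberColors C v) := by
  simp only [fiberColors, Finset.disjoint_left, mem_image, mem_univ, true_and]
  rintro _ ⟨b, rfl⟩ ⟨b', hb'⟩
  exact C.valid (adj_of_left h b b') hb'.symm

theorem chromaticNumber_le_card_fiberColors (C : (G₁.lexProd G₂).Coloring γ) (v : α) :
    G₂.chromaticNumber ≤ #(fiberColors C v) := by
  let C' : G₂.Coloring (fiberColors C v) :=
    Coloring.mk (fun b => ⟨C (v, b), mem_image_of_mem _ (mem_univ b)⟩)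
      fun h hc => C.valid (adj_of_right v h) (congrArg Subtype.val hc)
  simpa using C'.colorable.chromaticNumber_le

end SimpleGraph.lexProd

theorem stmt_4 {α β : Type*} [Fintype α] [Fintype β] [Nonempty β]
    (G₁ : SimpleGraph α) (G₂ : SimpleGraph β) (h : ∃ u v, G₁.Adj u v) :
    G₁.chromaticNumber + 2 * G₂.chromaticNumber - 2 ≤ (G₁.lexProd G₂).chromaticNumber := by
  obtain ⟨m, hm⟩ := ENat.ne_top_iff_exists.1 <| chromaticNumber_ne_top_iff_exists.2
    ⟨_, (G₁.lexProd G₂).colorable_chromaticNumber_of_fintype⟩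
  obtain ⟨k, hk⟩ := ENat.ne_top_iff_exists.1 <| chromaticNumber_ne_top_iff_exists.2
    ⟨_, G₂.colorable_chromaticNumber_of_fintype⟩
  obtain ⟨C⟩ := chromaticNumber_le_iff_colorable.1 hm.ge
  have hfiber (v : α) : k ≤ #(lexProd.fiberColors C v) := by
    exact_mod_cast hk ▸ lexProd.chromaticNumber_le_card_fiberColors C v
  obtain ⟨u, v, huv⟩ := h
  have h2k : 2 * k ≤ m := by
    have := card_le_univ (lexProd.fiberColors C u ∪ lexProd.fiberColors C v)
    rw [card_union_of_disjoint (lexProd.disjoint_fiberColors C huv), Fintype.card_fin] at this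
    linarith [hfiber u, hfiber v]
  have hG₁ := (colorable_of_disjoint_finsets _ (lexProd.fiberColors_nonempty C) hfiber
    fun _ _ => lexProd.disjoint_fiberColors C).chromaticNumber_le
  rw [← hm, ← hk]
  calc G₁.chromaticNumber + 2 * (k : ℕ∞) - 2 ≤ ((m - 2 * k + 2 : ℕ) : ℕ∞) + 2 * k - 2 := by gcongr
    _ = m := by norm_cast; omega
end

section
/- For integers l ≥ 2, m ≥ 3 and 1 ≤ r ≤ 3, the r-dynamic chromatic number of P_l[K_{1,m,m,m}] equals 4. -/
open SimpleGraph

/-!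
Colour `(i, v)` by `2 * (i % 2) + p v`, where `p v` is the parity of the distance from `v` to the
centre of the triple star. This colouring is proper, and a vertex `(i, v)` sees three colours: the
two colours of `(j, v)` and `(j, w)` on a neighbouring layer `j`, and the colour of `(i, w)` on its
own layer, where `w` is a neighbour of `v`. So four colours suffice for every `r ≤ 3`. Conversely,
an edge of `P_l` times an edge of the triple star spans a `K₄`, so even a proper colouring needs
four colours.
-/

namespace SimpleGraph

variable {α β : Type*}

lemma rDynChromaticNumber_eq_of_isRDynamicColoring {G : SimpleGraph α} {r k : ℕ} {c : α → ℕ}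
    (hc : G.IsRDynamicColoring r c) (hck : ∀ v, c v < k)
    (hmin : ∀ d k', G.IsRDynamicColoring r d → (∀ v, d v < k') → k ≤ k') :
    G.rDynChromaticNumber r = k :=
  le_antisymm (Nat.sInf_le ⟨c, hc, hck⟩)
    (le_csInf ⟨k, c, hc, hck⟩ fun k' ⟨d, hd, hdk⟩ => hmin d k' hd hdk)

section lexProd

variable {G₁ : SimpleGraph α} {G₂ : SimpleGraph β}

lemma four_le_of_lexProd_adj {c : α × β → ℕ} {k : ℕ}
    (hc : ∀ x y, (G₁.lexProd G₂).Adj x y → c x ≠ c y) (hk : ∀ x, c x < k)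
    {i j : α} {v w : β} (hij : G₁.Adj i j) (hvw : G₂.Adj v w) : 4 ≤ k := by
  have := hc (i, v) (i, w) (Or.inr ⟨rfl, hvw⟩)
  have := hc (j, v) (j, w) (Or.inr ⟨rfl, hvw⟩)
  have := hc (i, v) (j, v) (Or.inl hij)
  have := hc (i, v) (j, w) (Or.inl hij)
  have := hc (i, w) (j, v) (Or.inl hij)
  have := hc (i, w) (j, w) (Or.inl hij)
  have := hk (i, v)
  have := hk (i, w)
  have := hk (j, v)
  have := hk (j, w)
  omega

def lexColoring (b : ℕ) (c₁ : α → ℕ) (c₂ : β → ℕ) (x : α × β) : ℕ :=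
  b * c₁ x.1 + c₂ x.2

variable {b : ℕ} {c₁ : α → ℕ} {c₂ : β → ℕ}

lemma lexColoring_eq_lexColoring_iff (hb : ∀ y, c₂ y < b) {x y : α × β} :
    lexColoring b c₁ c₂ x = lexColoring b c₁ c₂ y ↔
      c₁ x.1 = c₁ y.1 ∧ c₂ x.2 = c₂ y.2 := by
  have hb0 : 0 < b := (Nat.zero_le _).trans_lt (hb x.2)
  have hdiv (z : α × β) : lexColoring b c₁ c₂ z / b = c₁ z.1 := by
    rw [lexColoring, Nat.mul_add_div hb0, Nat.div_eq_of_lt (hb z.2), add_zero]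
  refine ⟨fun h => ?_, fun ⟨h₁, h₂⟩ => by rw [lexColoring, lexColoring, h₁, h₂]⟩
  have h₁ : c₁ x.1 = c₁ y.1 := by rw [← hdiv x, ← hdiv y, h]
  refine ⟨h₁, ?_⟩
  rw [lexColoring, lexColoring, h₁] at h
  omega

lemma lexColoring_lt {a : ℕ} (ha : ∀ x, c₁ x < a) (hb : ∀ y, c₂ y < b) (x : α × β) :
    lexColoring b c₁ c₂ x < a * b :=
  calc b * c₁ x.1 + c₂ x.2 < b * c₁ x.1 + b := by have := hb x.2; omega
    _ = b * (c₁ x.1 + 1) := by ring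
    _ ≤ b * a := Nat.mul_le_mul_left b (ha x.1)
    _ = a * b := mul_comm b a

lemma lexColoring_ne_of_adj (hb : ∀ y, c₂ y < b) (h₁ : ∀ x y, G₁.Adj x y → c₁ x ≠ c₁ y)
    (h₂ : ∀ x y, G₂.Adj x y → c₂ x ≠ c₂ y) {x y : α × β} (h : (G₁.lexProd G₂).Adj x y) :
    lexColoring b c₁ c₂ x ≠ lexColoring b c₁ c₂ y := by
  rw [Ne, lexColoring_eq_lexColoring_iff hb]
  rcases h with h | ⟨-, h⟩
  · exact fun h' => h₁ _ _ h h'.1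
  · exact fun h' => h₂ _ _ h h'.2

lemma three_le_ncard_lexColoring_image_neighborSet [Finite α] [Finite β] (hb : ∀ y, c₂ y < b)
    (h₁ : ∀ x y, G₁.Adj x y → c₁ x ≠ c₁ y) (h₂ : ∀ x y, G₂.Adj x y → c₂ x ≠ c₂ y)
    (hG₁ : ∀ i, ∃ j, G₁.Adj i j) (hG₂ : ∀ v, ∃ w, G₂.Adj v w) (x : α × β) :
    3 ≤ (lexColoring b c₁ c₂ '' (G₁.lexProd G₂).neighborSet x).ncard := by
  obtain ⟨i, v⟩ := x
  obtain ⟨j, hij⟩ := hG₁ i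
  obtain ⟨w, hvw⟩ := hG₂ v
  set c := lexColoring b c₁ c₂
  have hsub : {c (j, v), c (j, w), c (i, w)} ⊆ c '' (G₁.lexProd G₂).neighborSet (i, v) := by
    rintro _ (rfl | rfl | rfl)
    exacts [⟨(j, v), Or.inl hij, rfl⟩, ⟨(j, w), Or.inl hij, rfl⟩,
      ⟨(i, w), Or.inr ⟨rfl, hvw⟩, rfl⟩]
  have hji : c₁ j ≠ c₁ i := (h₁ i j hij).symm
  have hthree : ({c (j, v), c (j, w), c (i, w)} : Set ℕ).ncard = 3 := by
    refine Set.ncard_eq_three.mpr ⟨_, _, _, ?_, ?_, ?_, rfl⟩ <;>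
      rw [Ne, lexColoring_eq_lexColoring_iff hb]
    exacts [fun h => h₂ v w hvw h.2, fun h => hji h.1, fun h => hji h.1]
  exact hthree ▸ Set.ncard_le_ncard hsub

lemma isRDynamicColoring_lexColoring [Finite α] [Finite β] (hb : ∀ y, c₂ y < b)
    (h₁ : ∀ x y, G₁.Adj x y → c₁ x ≠ c₁ y) (h₂ : ∀ x y, G₂.Adj x y → c₂ x ≠ c₂ y)
    {r : ℕ} (hr : r ≤ 3) (hG₁ : ∀ i, ∃ j, G₁.Adj i j) (hG₂ : ∀ v, ∃ w, G₂.Adj v w) :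
    (G₁.lexProd G₂).IsRDynamicColoring r (lexColoring b c₁ c₂) :=
  ⟨fun _ _ => lexColoring_ne_of_adj hb h₁ h₂, fun x =>
    (min_le_left _ _).trans
      (hr.trans (three_le_ncard_lexColoring_image_neighborSet hb h₁ h₂ hG₁ hG₂ x))⟩

end lexProd

lemma pathGraph_exists_adj {l : ℕ} (hl : 2 ≤ l) (i : Fin l) : ∃ j, (pathGraph l).Adj i j := by
  rcases Nat.eq_zero_or_pos i.val with h | h
  · exact ⟨⟨1, hl⟩, pathGraph_adj.mpr (Or.inl (by simp [h]))⟩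
  · exact ⟨⟨i.val - 1, by omega⟩, pathGraph_adj.mpr (Or.inr (by simp; omega))⟩

lemma pathGraph_mod_two_ne_of_adj {l : ℕ} {i j : Fin l} (h : (pathGraph l).Adj i j) :
    i.val % 2 ≠ j.val % 2 := by
  rcases pathGraph_adj.mp h with h | h <;> omega

end SimpleGraph

open SimpleGraph

lemma tripleStarGraph_exists_adj {m : ℕ} (hm : 1 ≤ m) (v : Fin (3 * m + 1)) :
    ∃ w, (tripleStarGraph m).Adj v w := by
  simp only [tripleStarGraph, fromRel_adj, ne_eq, Fin.ext_iff]
  have hv := v.isLt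
  by_cases h0 : v.val = 0
  · exact ⟨⟨1, by omega⟩, by simp only; omega⟩
  by_cases h2 : v.val ≤ 2 * m
  · exact ⟨⟨v.val + m, by omega⟩, by simp only [and_true]; omega⟩
  · exact ⟨⟨v.val - m, by omega⟩, by simp only; omega⟩

/-- The parity of the distance from `v` to the centre `0` of `tripleStarGraph m`. -/
def tripleStarColoring (m v : ℕ) : ℕ :=
  if v = 0 then 0 else if v ≤ m then 1 else if v ≤ 2 * m then 0 else 1

lemma tripleStarColoring_lt_two (m v : ℕ) : tripleStarColoring m v < 2 := by
  unfold tripleStarColoring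
  split_ifs <;> omega

lemma tripleStarColoring_ne_of_adj {m : ℕ} {v w : Fin (3 * m + 1)}
    (h : (tripleStarGraph m).Adj v w) : tripleStarColoring m v ≠ tripleStarColoring m w := by
  rw [tripleStarGraph, fromRel_adj] at h
  unfold tripleStarColoring
  split_ifs <;> omega

theorem stmt_14_general (l m r : ℕ) (hl : 2 ≤ l) (hm : 3 ≤ m) (hr3 : r ≤ 3) :
    ((SimpleGraph.pathGraph l).lexProd (tripleStarGraph m)).rDynChromaticNumber r = 4 := by
  have hpath : ∀ i : Fin l, ∃ j, (pathGraph l).Adj i j := pathGraph_exists_adj hl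
  have hstar := tripleStarGraph_exists_adj (m := m) (by omega)
  let pathColor (i : Fin l) : ℕ := i.val % 2
  let starColor (v : Fin (3 * m + 1)) : ℕ := tripleStarColoring m v
  refine rDynChromaticNumber_eq_of_isRDynamicColoring (c := lexColoring 2 pathColor starColor)
    (isRDynamicColoring_lexColoring (fun _ => tripleStarColoring_lt_two m _)
      (fun _ _ => pathGraph_mod_two_ne_of_adj) (fun _ _ => tripleStarColoring_ne_of_adj)
      hr3 hpath hstar)
    (lexColoring_lt (fun _ => Nat.mod_lt _ two_pos) fun _ => tripleStarColoring_lt_two m _)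
    fun d k hd hdk => ?_
  obtain ⟨j, hj⟩ := hpath ⟨0, by omega⟩
  obtain ⟨w, hw⟩ := hstar 0
  exact four_le_of_lexProd_adj hd.1 hdk hj hw

theorem stmt_14 (l m r : ℕ) (hl : 2 ≤ l) (hm : 3 ≤ m) (hr1 : 1 ≤ r) (hr3 : r ≤ 3) :
    ((SimpleGraph.pathGraph l).lexProd (tripleStarGraph m)).rDynChromaticNumber r = 4 :=
  stmt_14_general l m r hl hm hr3
end

section
/- For integers m, n ≥ 3 and 1 ≤ r ≤ 2m − 1, the r-dynamic chromatic number of K_m[P_n] equals exactly 2m. -/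
open SimpleGraph

/-!
The `2m` vertices `K_m × {0, 1}` form a clique, so at least `2m` colours are needed. Conversely,
colouring `(i, j)` by the pair `(i, parity of j)` is proper, and every vertex sees all `2m - 1`
other colours: the other `K_m`-coordinates directly, and the other parity along the path, which
has no isolated vertex once `n ≥ 2`. Hence this colouring is `r`-dynamic for every `r ≤ 2m - 1`.
-/

namespace SimpleGraph

variable {α β γ γ' : Type*} {G : SimpleGraph α} {G₁ : SimpleGraph α} {G₂ : SimpleGraph β}

theorem lexProd_pairwise_adj {ι κ : Type*} {f₁ : ι → α} {f₂ : κ → β}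
    (h₁ : Pairwise fun i j => G₁.Adj (f₁ i) (f₁ j))
    (h₂ : Pairwise fun i j => G₂.Adj (f₂ i) (f₂ j)) :
    Pairwise fun p q => (G₁.lexProd G₂).Adj (Prod.map f₁ f₂ p) (Prod.map f₁ f₂ q) := by
  rintro ⟨i, k⟩ ⟨j, l⟩ hne
  by_cases hij : i = j
  · subst hij
    exact Or.inr ⟨rfl, h₂ fun hkl => hne (by rw [hkl])⟩
  · exact Or.inl (h₁ hij)

def Coloring.lexProd (C₁ : G₁.Coloring γ) (C₂ : G₂.Coloring γ') :
    (G₁.lexProd G₂).Coloring (γ × γ') :=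
  Coloring.mk (fun p => (C₁ p.1, C₂ p.2)) fun {p q} hpq heq => by
    rcases hpq with h | ⟨-, h⟩
    · exact C₁.valid h (congrArg Prod.fst heq)
    · exact C₂.valid h (congrArg Prod.snd heq)

def Coloring.SeesAllOtherColors (C : G.Coloring γ) : Prop :=
  ∀ v a, a ≠ C v → ∃ w, G.Adj v w ∧ C w = a

theorem selfColoring_top_seesAllOtherColors :
    (⊤ : SimpleGraph α).selfColoring.SeesAllOtherColors :=
  fun _ a ha => ⟨a, ha.symm, rfl⟩

theorem pathGraph.bicoloring_seesAllOtherColors {n : ℕ} (hn : 2 ≤ n) :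
    (pathGraph.bicoloring n).SeesAllOtherColors := by
  have : Nontrivial (Fin n) := Fin.nontrivial_iff_two_le.2 hn
  intro j b hb
  obtain ⟨j', hj'⟩ := (pathGraph_preconnected n).exists_adj_of_nontrivial j
  refine ⟨j', hj', ?_⟩
  have hne := (pathGraph.bicoloring n).valid hj'
  exact (by decide : ∀ a b c : Bool, a ≠ c → b ≠ c → b = a) _ _ _ hb hne.symm

theorem Coloring.SeesAllOtherColors.surjective [Nonempty α] {C : G.Coloring γ}
    (hC : C.SeesAllOtherColors) : Function.Surjective C := fun a => by
  obtain ⟨v⟩ := ‹Nonempty α›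
  by_cases ha : a = C v
  · exact ⟨v, ha.symm⟩
  · obtain ⟨w, -, hw⟩ := hC v a ha
    exact ⟨w, hw⟩

theorem Coloring.SeesAllOtherColors.lexProd [Nonempty β] {C₁ : G₁.Coloring γ}
    {C₂ : G₂.Coloring γ'} (h₁ : C₁.SeesAllOtherColors) (h₂ : C₂.SeesAllOtherColors) :
    (C₁.lexProd C₂).SeesAllOtherColors := by
  rintro ⟨x, y⟩ ⟨a, b⟩ hab
  by_cases ha : a = C₁ x
  · subst ha
    obtain ⟨y', hy', rfl⟩ := h₂ y b fun hb => hab (by rw [hb]; rfl)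
    exact ⟨(x, y'), Or.inr ⟨rfl, hy'⟩, rfl⟩
  · obtain ⟨x', hx', rfl⟩ := h₁ x a ha
    obtain ⟨y', rfl⟩ := h₂.surjective b
    exact ⟨(x', y'), Or.inl hx', rfl⟩

theorem Coloring.SeesAllOtherColors.isRDynamicColoring [Fintype γ] {C : G.Coloring γ}
    (hC : C.SeesAllOtherColors) {k r : ℕ} (e : γ ≃ Fin k) (hr : r ≤ k - 1) :
    G.IsRDynamicColoring r fun v => e (C v) := by
  refine ⟨fun u v huv heq => C.valid huv (e.injective (Fin.ext heq)), fun v => ?_⟩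
  have hsub : (fun a => (e a : ℕ)) '' {C v}ᶜ ⊆ (fun v => (e (C v) : ℕ)) '' G.neighborSet v := by
    rintro _ ⟨a, ha, rfl⟩
    obtain ⟨w, hw, rfl⟩ := hC v a ha
    exact ⟨w, hw, rfl⟩
  have hcard : ((fun a => (e a : ℕ)) '' {C v}ᶜ).ncard = k - 1 := by
    rw [Set.ncard_image_of_injective (f := fun a => (e a : ℕ)) _
      (Fin.val_injective.comp e.injective), Set.ncard_compl,
      Set.ncard_singleton, Nat.card_eq_fintype_card, Fintype.card_congr e, Fintype.card_fin]
  calc min r (G.neighborSet v).ncard ≤ r := min_le_left _ _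
    _ ≤ k - 1 := hr
    _ ≤ _ := hcard ▸ Set.ncard_le_ncard hsub ((Set.finite_Iio k).subset (by
      rintro _ ⟨w, -, rfl⟩
      exact (e (C w)).isLt))

theorem IsRDynamicColoring.colorable {r k : ℕ} {c : α → ℕ} (hc : G.IsRDynamicColoring r c)
    (hk : ∀ v, c v < k) : G.Colorable k :=
  ⟨Coloring.mk (fun v => ⟨c v, hk v⟩) fun huv heq => hc.1 _ _ huv (congrArg Fin.val heq)⟩

theorem rDynChromaticNumber_eq_of_pairwise_adj {ι : Type*} [Finite ι] {r k : ℕ} {c : α → ℕ}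
    (hc : G.IsRDynamicColoring r c) (hk : ∀ v, c v < k) (f : ι → α)
    (hf : Pairwise fun i j => G.Adj (f i) (f j)) (hι : Nat.card ι = k) :
    G.rDynChromaticNumber r = k :=
  le_antisymm (Nat.sInf_le ⟨c, hc, hk⟩) <| le_csInf ⟨_, c, hc, hk⟩
    fun _ ⟨_, hc', hk'⟩ => hι ▸ (hc'.colorable hk').card_le_of_pairwise_adj f hf

end SimpleGraph

theorem stmt_16_general (m n r : ℕ) (hn : 3 ≤ n) (hr : r ≤ 2 * m - 1) :
    ((completeGraph (Fin m)).lexProd (SimpleGraph.pathGraph n)).rDynChromaticNumber r = 2 * m := by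
  have hn2 : 2 ≤ n := by omega
  have : Nonempty (Fin n) := ⟨⟨0, by omega⟩⟩
  let e : Fin m × Bool ≃ Fin (2 * m) := Fintype.equivFinOfCardEq (by simp [mul_comm])
  have hC := (selfColoring_top_seesAllOtherColors.lexProd
    (pathGraph.bicoloring_seesAllOtherColors hn2)).isRDynamicColoring e hr
  have hpath : Pairwise fun i j : Fin 2 =>
      (pathGraph n).Adj (Fin.castLE hn2 i) (Fin.castLE hn2 j) := by
    intro i j hij
    fin_cases i <;> fin_cases j <;> simp_all [pathGraph_adj]
  exact rDynChromaticNumber_eq_of_pairwise_adj hC (fun _ => (e _).isLt) _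
    (lexProd_pairwise_adj (f₁ := id) (fun _ _ h => h) hpath) (by simp [mul_comm])

theorem stmt_16 (m n r : ℕ) (hm : 3 ≤ m) (hn : 3 ≤ n) (hr1 : 1 ≤ r) (hr : r ≤ 2 * m - 1) :
    ((completeGraph (Fin m)).lexProd (SimpleGraph.pathGraph n)).rDynChromaticNumber r = 2 * m :=
  stmt_16_general m n r hn hr
end
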